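/- Under Assumption 1 and consistency of potential outcomes, the IPW influence term is mean zero: E[ Σ_{t=1}^T I_{jkt}(i) ( 1{A_{i,t} = j} Y_{i,t} / π_j^t(Z_{i,t}) − θ_{jk} ) ] = 0. -/

import Mathlib

/-!
Framework for master protocol trials with re-enrollment.
-/

open MeasureTheory ProbabilityTheory Filter Topology
open scoped Classical ENNReal NNReal

namespace MasterProtocol

/-- The setup of a master protocol trial with re-enrollment (Section 2.2 of the paper),
for a single generic individual with distribution `μ` on `Ω`.  Treatments take values in
`Fin J`, episodes range over `1, …, Tmax`.  Includes the consistency of potential outcomes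
and Assumption 1 (sequential treatment randomization). -/
structure Setup (Ω 𝒵 𝒳 : Type*) [m0 : MeasurableSpace Ω] [StandardBorelSpace Ω] [Nonempty Ω]
    [MeasurableSpace 𝒵] [MeasurableSpace 𝒳]
    (μ : Measure Ω) [IsProbabilityMeasure μ] (J Tmax : ℕ) where
  /-- `T ω` : total number of treatment episodes attended -/
  T : Ω → ℕ
  /-- `A t ω` : treatment assignment at episode `t` -/
  A : ℕ → Ω → Fin J
  /-- `Y t ω` : observed outcome at episode `t` -/
  Y : ℕ → Ω → ℝ
  /-- `Z t ω` : subset of observed history used for eligibility/assignment at episode `t` -/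
  Z : ℕ → Ω → 𝒵
  /-- `Xc t ω` : baseline covariates measured before episode-`t` assignment -/
  Xc : ℕ → Ω → 𝒳
  /-- `Ypot t j ω` : the potential outcome `Y_{t}^{(Ā_{t-1}, j)}` at episode `t` under the
  actually received treatment history up to `t-1` followed by treatment `j` at episode `t` -/
  Ypot : ℕ → Fin J → Ω → ℝ
  /-- `pi j t` : known randomization probability functions `π_j^t` -/
  pi : Fin J → ℕ → 𝒵 → ℝ
  /-- `hist t` : the σ-algebra of the observed history `F_{t-1}` prior to episode-`t`
  assignment -/
  hist : ℕ → MeasurableSpace Ω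
  hist_le : ∀ t, hist t ≤ m0
  measurable_T : Measurable T
  measurable_A : ∀ t, Measurable (A t)
  measurable_Y : ∀ t, Measurable (Y t)
  measurable_Z : ∀ t, Measurable[hist t] (Z t)
  measurable_Xc : ∀ t, Measurable[hist t] (Xc t)
  measurable_Ypot : ∀ t j, Measurable (Ypot t j)
  measurable_pi : ∀ j t, Measurable (pi j t)
  pi_nonneg : ∀ j t z, 0 ≤ pi j t z
  pi_sum_one : ∀ t z, ∑ j, pi j t z = 1
  integrable_Y : ∀ t, Integrable (Y t) μ
  integrable_Ypot : ∀ t j, Integrable (Ypot t j) μ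
  /-- Consistency: the observed outcome is the potential outcome under the received
  treatment history. -/
  consistency : ∀ t ω, Y t ω = Ypot t (A t ω) ω
  /-- Assumption 1(i): conditionally on the observed history and on attending episode `t`
  (i.e. on the event `{T ≥ t}`), the treatment assignment at episode `t` is independent of the
  potential outcomes. -/
  rand_indep : ∀ t, 1 ≤ t → ∀ j : Fin J,
    CondIndepFun (hist t) (hist_le t) (A t) (Ypot t j) (μ.restrict {ω | t ≤ T ω})
  /-- Assumption 1(ii): on the event `{T ≥ t}`, the probability of assignment to arm `j` at
  episode `t` given the observed history is `π_j^t(Z_t)`. -/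
  rand_prob : ∀ t, 1 ≤ t → ∀ j : Fin J,
    (μ.restrict {ω | t ≤ T ω})[({ω | A t ω = j}).indicator (fun _ => (1 : ℝ)) | hist t]
      =ᵐ[μ.restrict {ω | t ≤ T ω}] fun ω => pi j t (Z t ω)

variable {Ω 𝒵 𝒳 : Type*} [MeasurableSpace Ω] [StandardBorelSpace Ω] [Nonempty Ω]
  [MeasurableSpace 𝒵] [MeasurableSpace 𝒳]
  {μ : Measure Ω} [IsProbabilityMeasure μ] {J Tmax : ℕ}

/-- The episode-`t` entire concurrently eligible (ECE) population for comparing treatments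
`j` and `k` : individuals with `π_j^t(Z_t) > 0`, `π_k^t(Z_t) > 0` and `T ≥ t`. -/
def ECE (S : Setup Ω 𝒵 𝒳 μ J Tmax) (j k : Fin J) (t : ℕ) : Set Ω :=
  {ω | 0 < S.pi j t (S.Z t ω) ∧ 0 < S.pi k t (S.Z t ω) ∧ t ≤ S.T ω}

/-- `P(I_{jkt}(i) = 1)`, the probability of membership in the episode-`t` ECE population. -/
noncomputable def probECE (S : Setup Ω 𝒵 𝒳 μ J Tmax) (j k : Fin J) (t : ℕ) : ℝ :=
  (μ (ECE S j k t)).toReal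

/-- `θ_{jkt} = E[ Y_t^{(Ā_{t-1}, j)} | I_{jkt} = 1 ]`. -/
noncomputable def thetaT (S : Setup Ω 𝒵 𝒳 μ J Tmax) (j k : Fin J) (t : ℕ) : ℝ :=
  ∫ ω, S.Ypot t j ω ∂(μ[|ECE S j k t])

/-- The per-episode added-effect estimand
`θ_{jk} = Σ_t P(I_{jkt}=1) θ_{jkt} / Σ_t P(I_{jkt}=1)`. -/
noncomputable def theta (S : Setup Ω 𝒵 𝒳 μ J Tmax) (j k : Fin J) : ℝ :=
  (∑ t ∈ Finset.Icc 1 Tmax, probECE S j k t * thetaT S j k t) /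
    (∑ t ∈ Finset.Icc 1 Tmax, probECE S j k t)

/-- Per-individual summed IPW term `Σ_t I_{jkt} · 1{A_t = j} Y_t / π_j^t(Z_t)`. -/
noncomputable def ipwNum (S : Setup Ω 𝒵 𝒳 μ J Tmax) (j k : Fin J) (ω : Ω) : ℝ :=
  ∑ t ∈ Finset.Icc 1 Tmax,
    if ω ∈ ECE S j k t then (if S.A t ω = j then S.Y t ω / S.pi j t (S.Z t ω) else 0) else 0

/-- Per-individual count of ECE memberships `Σ_t I_{jkt}`. -/
noncomputable def eceCount (S : Setup Ω 𝒵 𝒳 μ J Tmax) (j k : Fin J) (ω : Ω) : ℝ :=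
  ∑ t ∈ Finset.Icc 1 Tmax, if ω ∈ ECE S j k t then (1 : ℝ) else 0

/-- Per-individual summed inverse-probability weights `Σ_t I_{jkt} · 1{A_t = j} / π_j^t(Z_t)`. -/
noncomputable def ipwWeight (S : Setup Ω 𝒵 𝒳 μ J Tmax) (j k : Fin J) (ω : Ω) : ℝ :=
  ∑ t ∈ Finset.Icc 1 Tmax,
    if ω ∈ ECE S j k t then (if S.A t ω = j then 1 / S.pi j t (S.Z t ω) else 0) else 0

/-- The IPW estimator `θ̂^{ipw}_{jk}` based on the first `n` individuals `X 0, …, X (n-1)`. -/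
noncomputable def ipwEst {Ω' : Type*} (S : Setup Ω 𝒵 𝒳 μ J Tmax) (j k : Fin J)
    (X : ℕ → Ω' → Ω) (n : ℕ) (ω' : Ω') : ℝ :=
  (∑ i ∈ Finset.range n, ipwNum S j k (X i ω')) /
    (∑ i ∈ Finset.range n, eceCount S j k (X i ω'))

/-- The stabilized IPW estimator `θ̂^{sipw}_{jk}`. -/
noncomputable def sipwEst {Ω' : Type*} (S : Setup Ω 𝒵 𝒳 μ J Tmax) (j k : Fin J)
    (X : ℕ → Ω' → Ω) (n : ℕ) (ω' : Ω') : ℝ :=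
  (∑ i ∈ Finset.range n, ipwNum S j k (X i ω')) /
    (∑ i ∈ Finset.range n, ipwWeight S j k (X i ω'))

/-- The influence function `φ^{ipw}_{jk}` of the IPW estimator. -/
noncomputable def phiIPW (S : Setup Ω 𝒵 𝒳 μ J Tmax) (j k : Fin J) (ω : Ω) : ℝ :=
  (∑ t ∈ Finset.Icc 1 Tmax, probECE S j k t)⁻¹ *
    ∑ t ∈ Finset.Icc 1 Tmax,
      if ω ∈ ECE S j k t then
        (if S.A t ω = j then S.Y t ω / S.pi j t (S.Z t ω) else 0) - theta S j k
      else 0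

/-- The influence function `φ^{sipw}_{jk}` of the stabilized IPW estimator. -/
noncomputable def phiSIPW (S : Setup Ω 𝒵 𝒳 μ J Tmax) (j k : Fin J) (ω : Ω) : ℝ :=
  (∑ t ∈ Finset.Icc 1 Tmax, probECE S j k t)⁻¹ *
    ∑ t ∈ Finset.Icc 1 Tmax,
      if ω ∈ ECE S j k t then
        (if S.A t ω = j then (S.Y t ω - theta S j k) / S.pi j t (S.Z t ω) else 0)
      else 0

/-- An i.i.d. sample `X 0, X 1, …` of individuals, each with distribution `μ`. -/
structure IIDSample {Ω' : Type*} [MeasurableSpace Ω'] (P : Measure Ω')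
    (μ : Measure Ω) (X : ℕ → Ω' → Ω) : Prop where
  measurable : ∀ i, Measurable (X i)
  indep : iIndepFun X P
  ident : ∀ i, Measure.map (X i) P = μ

/-- Convergence in distribution (weak convergence, tested against bounded continuous
functions) of a sequence of real random variables to a centered Gaussian with variance `v`
(`v` truncated at `0`). -/
def TendstoInDistNormal {Ω' : Type*} [MeasurableSpace Ω'] (P : Measure Ω')
    (W : ℕ → Ω' → ℝ) (v : ℝ) : Prop :=
  ∀ f : BoundedContinuousFunction ℝ ℝ,
    Tendsto (fun n => ∫ ω', f (W n ω') ∂P) atTop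
      (𝓝 (∫ x, f x ∂(gaussianReal 0 (Real.toNNReal v))))

/-- Convergence in probability of a sequence of real random variables to a constant. -/
def TendstoInProb {Ω' : Type*} [MeasurableSpace Ω'] (P : Measure Ω')
    (W : ℕ → Ω' → ℝ) (c : ℝ) : Prop :=
  ∀ ε : ℝ, 0 < ε → Tendsto (fun n => P {ω' | ε ≤ |W n ω' - c|}) atTop (𝓝 0)


/-- A stratification of the episode-`t` ECE populations (for the post-stratification
estimators): at each episode `t` the ECE population is partitioned into strata
`1, …, H t`, on each of which both `π_j^t(Z_t)` and `π_k^t(Z_t)` are constant.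
`G t ω = h` iff `ω` belongs to the `h`-th stratum. -/
structure Strata (S : Setup Ω 𝒵 𝒳 μ J Tmax) (j k : Fin J) where
  /-- stratum label at episode `t` -/
  G : ℕ → Ω → ℕ
  /-- number of strata `H_{jkt}` at episode `t` -/
  H : ℕ → ℕ
  measurable_G : ∀ t, Measurable (G t)
  /-- every member of the episode-`t` ECE population belongs to one of the `H t` strata -/
  mem_stratum : ∀ t ω, ω ∈ ECE S j k t → G t ω ∈ Finset.Icc 1 (H t)
  /-- `G t ω = h` (for a valid label `h`) implies ECE membership -/
  stratum_subset : ∀ t ω, G t ω ∈ Finset.Icc 1 (H t) → ω ∈ ECE S j k t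
  /-- `π_j^t(Z_t)` is constant on each stratum -/
  pi_j_const : ∀ t ω ω', ω ∈ ECE S j k t → ω' ∈ ECE S j k t → G t ω = G t ω' →
    S.pi j t (S.Z t ω) = S.pi j t (S.Z t ω')
  /-- `π_k^t(Z_t)` is constant on each stratum -/
  pi_k_const : ∀ t ω ω', ω ∈ ECE S j k t → ω' ∈ ECE S j k t → G t ω = G t ω' →
    S.pi k t (S.Z t ω) = S.pi k t (S.Z t ω')

variable {S : Setup Ω 𝒵 𝒳 μ J Tmax} {j k : Fin J}

/-- `E(Y_t | A_t = j, G_t = h)`. -/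
noncomputable def condMeanY (S : Setup Ω 𝒵 𝒳 μ J Tmax) (j k : Fin J) (St : Strata S j k)
    (t h : ℕ) : ℝ :=
  ∫ ω, S.Y t ω ∂(μ[|{ω | S.A t ω = j ∧ St.G t ω = h}])

/-- `P(A_t = j | G_t = h)`. -/
noncomputable def condPj (S : Setup Ω 𝒵 𝒳 μ J Tmax) (j k : Fin J) (St : Strata S j k)
    (t h : ℕ) : ℝ :=
  ((μ[|{ω | St.G t ω = h}]) {ω | S.A t ω = j}).toReal

/-- The post-stratification estimator `θ̂^{ps}_{jk}` based on the first `n` individuals. -/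
noncomputable def psEst {Ω' : Type*} (S : Setup Ω 𝒵 𝒳 μ J Tmax) (j k : Fin J)
    (St : Strata S j k) (X : ℕ → Ω' → Ω) (n : ℕ) (ω' : Ω') : ℝ :=
  (∑ t ∈ Finset.Icc 1 Tmax, ∑ h ∈ Finset.Icc 1 (St.H t),
      ((∑ i ∈ Finset.range n, if St.G t (X i ω') = h then (1 : ℝ) else 0) /
          (∑ i ∈ Finset.range n,
            if S.A t (X i ω') = j ∧ St.G t (X i ω') = h then (1 : ℝ) else 0)) *
        ∑ i ∈ Finset.range n,
          if S.A t (X i ω') = j ∧ St.G t (X i ω') = h then S.Y t (X i ω') else 0) /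
    (∑ i ∈ Finset.range n, eceCount S j k (X i ω'))

/-- The influence function `φ^{ps}_{jk}` of the post-stratification estimator. -/
noncomputable def phiPS (S : Setup Ω 𝒵 𝒳 μ J Tmax) (j k : Fin J) (St : Strata S j k)
    (ω : Ω) : ℝ :=
  (∑ t ∈ Finset.Icc 1 Tmax, probECE S j k t)⁻¹ *
    ∑ t ∈ Finset.Icc 1 Tmax, ∑ h ∈ Finset.Icc 1 (St.H t),
      ((if S.A t ω = j ∧ St.G t ω = h then
          (S.Y t ω - condMeanY S j k St t h) / condPj S j k St t h
        else 0) +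
        (if St.G t ω = h then condMeanY S j k St t h - theta S j k else 0))

/-- Per-individual summed AIPW term, for a given collection of (episode-specific) working
models `m t : 𝒳 → ℝ`. -/
noncomputable def aipwTerm (S : Setup Ω 𝒵 𝒳 μ J Tmax) (j k : Fin J)
    (m : ℕ → 𝒳 → ℝ) (ω : Ω) : ℝ :=
  ∑ t ∈ Finset.Icc 1 Tmax,
    if ω ∈ ECE S j k t then
      (if S.A t ω = j then (S.Y t ω - m t (S.Xc t ω)) / S.pi j t (S.Z t ω) else 0) +
        m t (S.Xc t ω)
    else 0

/-- The AIPW estimator `θ̂^{aipw}_{jk}` based on the first `n` individuals, where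
`muhat n t ω'` is the estimated (data-dependent) working model for episode `t` at
sample size `n`. -/
noncomputable def aipwEst {Ω' : Type*} (S : Setup Ω 𝒵 𝒳 μ J Tmax) (j k : Fin J)
    (muhat : ℕ → ℕ → Ω' → 𝒳 → ℝ) (X : ℕ → Ω' → Ω) (n : ℕ) (ω' : Ω') : ℝ :=
  (∑ i ∈ Finset.range n, aipwTerm S j k (fun t => muhat n t ω') (X i ω')) /
    (∑ i ∈ Finset.range n, eceCount S j k (X i ω'))

/-- The influence function `φ^{aipw}_{jk}` of the AIPW estimator, with limiting working
models `m t`. -/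
noncomputable def phiAIPW (S : Setup Ω 𝒵 𝒳 μ J Tmax) (j k : Fin J)
    (m : ℕ → 𝒳 → ℝ) (ω : Ω) : ℝ :=
  (∑ t ∈ Finset.Icc 1 Tmax, probECE S j k t)⁻¹ *
    ∑ t ∈ Finset.Icc 1 Tmax,
      if ω ∈ ECE S j k t then
        (if S.A t ω = j then (S.Y t ω - m t (S.Xc t ω)) / S.pi j t (S.Z t ω) else 0) +
          m t (S.Xc t ω) - theta S j k
      else 0

/-- `μ̄_{jkt}(h) = E[ μ_{jkt}(X_t) | G_t = h ]`. -/
noncomputable def muBar (S : Setup Ω 𝒵 𝒳 μ J Tmax) (j k : Fin J) (St : Strata S j k)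
    (m : ℕ → 𝒳 → ℝ) (t h : ℕ) : ℝ :=
  ∫ ω, m t (S.Xc t ω) ∂(μ[|{ω | St.G t ω = h}])

/-- The adjusted post-stratification estimator `θ̂^{aps}_{jk}` based on the first `n`
individuals. -/
noncomputable def apsEst {Ω' : Type*} (S : Setup Ω 𝒵 𝒳 μ J Tmax) (j k : Fin J)
    (St : Strata S j k) (muhat : ℕ → ℕ → Ω' → 𝒳 → ℝ) (X : ℕ → Ω' → Ω) (n : ℕ)
    (ω' : Ω') : ℝ :=
  (∑ t ∈ Finset.Icc 1 Tmax, ∑ h ∈ Finset.Icc 1 (St.H t),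
        ((∑ i ∈ Finset.range n, if St.G t (X i ω') = h then (1 : ℝ) else 0) /
            (∑ i ∈ Finset.range n,
              if S.A t (X i ω') = j ∧ St.G t (X i ω') = h then (1 : ℝ) else 0)) *
          ∑ i ∈ Finset.range n,
            if S.A t (X i ω') = j ∧ St.G t (X i ω') = h then
              S.Y t (X i ω') - muhat n t ω' (S.Xc t (X i ω'))
            else 0) /
      (∑ i ∈ Finset.range n, eceCount S j k (X i ω')) +
    (∑ i ∈ Finset.range n, ∑ t ∈ Finset.Icc 1 Tmax,
        if X i ω' ∈ ECE S j k t then muhat n t ω' (S.Xc t (X i ω')) else 0) /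
      (∑ i ∈ Finset.range n, eceCount S j k (X i ω'))

/-- The influence function `φ^{aps}_{jk}` of the adjusted post-stratification estimator. -/
noncomputable def phiAPS (S : Setup Ω 𝒵 𝒳 μ J Tmax) (j k : Fin J) (St : Strata S j k)
    (m : ℕ → 𝒳 → ℝ) (ω : Ω) : ℝ :=
  (∑ t ∈ Finset.Icc 1 Tmax, probECE S j k t)⁻¹ *
    ∑ t ∈ Finset.Icc 1 Tmax, ∑ h ∈ Finset.Icc 1 (St.H t),
      ((if S.A t ω = j ∧ St.G t ω = h then
          (S.Y t ω - m t (S.Xc t ω) + muBar S j k St m t h - condMeanY S j k St t h) /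
            condPj S j k St t h
        else 0) +
        (if St.G t ω = h then
          condMeanY S j k St t h + m t (S.Xc t ω) - muBar S j k St m t h - theta S j k
        else 0))

/-! ### The Donsker (uniform entropy integral) condition of Assumption 2 -/

/-- The `ε`-covering number of a class `𝓕` with respect to a (pseudo-)distance `d` :
the smallest cardinality of a finite `ε`-net for `𝓕`. -/
noncomputable def coveringNumber {F : Type*} (𝓕 : Set F) (d : F → F → ℝ) (ε : ℝ) : ℝ≥0∞ :=
  ⨅ (s : Finset F) (_ : ∀ f ∈ 𝓕, ∃ g ∈ s, d f g ≤ ε), (s.card : ℝ≥0∞)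

/-- A finitely supported probability distribution on `𝒳`, represented as a finitely
supported function with nonnegative values summing to one. -/
def IsFinSuppProb {𝒳 : Type*} (q : 𝒳 →₀ ℝ) : Prop :=
  (∀ x, 0 ≤ q x) ∧ (∑ x ∈ q.support, q x) = 1

/-- The `L₂(Q)` pseudo-distance between two functions, for a finitely supported
distribution `q`. -/
noncomputable def L2dist {𝒳 : Type*} (q : 𝒳 →₀ ℝ) (f g : 𝒳 → ℝ) : ℝ :=
  Real.sqrt (∑ x ∈ q.support, q x * (f x - g x) ^ 2)

/-- The uniform entropy integral condition (Donsker condition) for a class of functions: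
`∫₀¹ sup_Q √(log N(𝓕, L₂(Q), s)) ds < ∞`, the supremum being over all finitely supported
probability distributions `Q`. -/
def UniformEntropyCondition {𝒳 : Type*} (𝓕 : Set (𝒳 → ℝ)) : Prop :=
  (∀ (q : 𝒳 →₀ ℝ), IsFinSuppProb q → ∀ s : ℝ, 0 < s →
      coveringNumber 𝓕 (L2dist q) s ≠ ⊤) ∧
    (∫⁻ s in Set.Ioc (0 : ℝ) 1,
        ⨆ q : {q : 𝒳 →₀ ℝ // IsFinSuppProb q},
          ENNReal.ofReal (Real.sqrt (Real.log (coveringNumber 𝓕 (L2dist q.1) s).toReal)))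
      < ⊤

/-- Assumption 2 (stability) for the episode-`t` working model: the data-dependent working
model `muhat · t` converges in probability, in `L₂` of the covariate distribution, to a fixed
square-integrable function `m t`, and (Donsker condition) eventually lies in a class with a
finite uniform entropy integral containing `m t`. -/
structure Stability {Ω' : Type*} [MeasurableSpace Ω'] (P : Measure Ω')
    (S : Setup Ω 𝒵 𝒳 μ J Tmax)
    (muhat : ℕ → ℕ → Ω' → 𝒳 → ℝ) (m : ℕ → 𝒳 → ℝ) (t : ℕ) : Prop where
  measurable_m : Measurable (m t)
  square_integrable : MemLp (fun ω => m t (S.Xc t ω)) 2 μ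
  l2_tendsto : ∀ ε : ℝ, 0 < ε →
    Tendsto (fun n =>
        P {ω' | ε ≤ ∫ ω, (muhat n t ω' (S.Xc t ω) - m t (S.Xc t ω)) ^ 2 ∂μ})
      atTop (𝓝 0)
  donsker : ∃ 𝓕 : Set (𝒳 → ℝ), m t ∈ 𝓕 ∧ UniformEntropyCondition 𝓕 ∧
    Tendsto (fun n => P {ω' | muhat n t ω' ∈ 𝓕}) atTop (𝓝 1)


section AuxFactorization

variable {Ω₀ : Type*} {m' : MeasurableSpace Ω₀} [mΩ₀ : MeasurableSpace Ω₀]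
  [StandardBorelSpace Ω₀] {ν : Measure Ω₀} [IsFiniteMeasure ν]

/-- Factorization of conditional expectation for a conditionally independent pair, when one
factor is the indicator of a preimage. -/
lemma condexp_indicator_mul_of_condIndepFun {β : Type*} [MeasurableSpace β]
    (hm : m' ≤ mΩ₀) {A : Ω₀ → β} {ξ : Ω₀ → ℝ}
    (hA : Measurable A) (hξm : Measurable ξ) (hξi : Integrable ξ ν)
    {s : Set β} (hs : MeasurableSet s)
    (hindep : CondIndepFun m' hm A ξ ν) :
    ν[(A ⁻¹' s).indicator ξ | m'] =ᵐ[ν]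
      fun ω => (ν[(A ⁻¹' s).indicator (fun _ => (1:ℝ)) | m']) ω * (ν[ξ | m']) ω := by
  set E : Set Ω₀ := A ⁻¹' s with hEdef
  have hE : MeasurableSet E := hA hs
  have h1 : ∀ q : ℚ, ∀ᵐ ω ∂ν,
      condExpKernel ν m' ω (E ∩ ξ ⁻¹' Set.Iic (q : ℝ))
        = condExpKernel ν m' ω E * condExpKernel ν m' ω (ξ ⁻¹' Set.Iic (q : ℝ)) := fun q =>
    ae_of_ae_trim hm
      (hindep.measure_inter_preimage_eq_mul s (Set.Iic (q : ℝ)) hs measurableSet_Iic)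
  have h2 : ∀ᵐ ω ∂ν, Integrable ξ (condExpKernel ν m' ω) := hξi.condExpKernel_ae
  have h3 : ∀ᵐ ω ∂ν, ∫ y, E.indicator ξ y ∂(condExpKernel ν m' ω)
      = (condExpKernel ν m' ω E).toReal * ∫ y, ξ y ∂(condExpKernel ν m' ω) := by
    filter_upwards [ae_all_iff.mpr h1, h2] with ω hq hint
    haveI : IsProbabilityMeasure (condExpKernel ν m' ω) :=
      IsMarkovKernel.isProbabilityMeasure ω
    set κω := condExpKernel ν m' ω with hκω
    have hgen : MeasurableSpace.comap ξ inferInstance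
        = MeasurableSpace.generateFrom
            (Set.preimage ξ '' (⋃ q : ℚ, {Set.Iic (q : ℝ)})) := by
      conv_lhs => rw [BorelSpace.measurable_eq (α := ℝ),
        Real.borel_eq_generateFrom_Iic_rat, MeasurableSpace.comap_generateFrom]
    have hindepσ : Indep (MeasurableSpace.generateFrom {E})
        (MeasurableSpace.comap ξ inferInstance) κω := by
      rw [hgen]
      refine IndepSets.indep ?_ ?_ ?_ ?_ rfl rfl ?_
      · exact MeasurableSpace.generateFrom_le fun u hu => by
          rw [Set.mem_singleton_iff] at hu; rw [hu]; exact hE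
      · rw [← hgen]; exact hξm.comap_le
      · exact IsPiSystem.singleton E
      · exact Real.isPiSystem_Iic_rat.comap ξ
      · rintro t1 t2 ht1 ⟨u, hu, rfl⟩
        rw [Set.mem_singleton_iff] at ht1
        subst ht1
        simp only [Set.mem_iUnion, Set.mem_singleton_iff] at hu
        obtain ⟨q, rfl⟩ := hu
        exact Filter.Eventually.of_forall fun _ => by
          simpa [Kernel.const_apply] using hq q
    have hIndicMeas : Measurable[MeasurableSpace.generateFrom {E}]
        (E.indicator (fun _ => (1:ℝ))) :=
      measurable_const.indicator (MeasurableSpace.measurableSet_generateFrom rfl)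
    have hIF : IndepFun (E.indicator (fun _ => (1:ℝ))) ξ κω := by
      rw [indepFun_iff_measure_inter_preimage_eq_mul]
      intro u v hu hv
      exact (Indep_iff _ _ _).mp hindepσ _ _ (hIndicMeas hu) ⟨v, hv, rfl⟩
    have hIndicInt : Integrable (E.indicator (fun _ => (1:ℝ))) κω :=
      (integrable_const _).indicator hE
    have hmul := hIF.integral_fun_mul_eq_mul_integral hIndicInt.aestronglyMeasurable hint.aestronglyMeasurable
    have heq : (fun y => E.indicator (fun _ => (1:ℝ)) y * ξ y) = E.indicator ξ := by
      funext y; by_cases hy : y ∈ E <;> simp [hy]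
    calc ∫ y, E.indicator ξ y ∂κω
        = ∫ y, E.indicator (fun _ => (1:ℝ)) y * ξ y ∂κω := by rw [heq]
      _ = (∫ y, E.indicator (fun _ => (1:ℝ)) y ∂κω) * ∫ y, ξ y ∂κω := hmul
      _ = (κω E).toReal * ∫ y, ξ y ∂κω := by
          rw [integral_indicator_const (1:ℝ) hE, smul_eq_mul, mul_one, measureReal_def]
  have hEint : Integrable (E.indicator ξ) ν := hξi.indicator hE
  refine (condExp_ae_eq_integral_condExpKernel hm hEint).trans ?_
  filter_upwards [h3, condExpKernel_ae_eq_condExp hm hE,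
    condExp_ae_eq_integral_condExpKernel hm hξi] with ω h3ω hEω hξω
  rw [h3ω, ← measureReal_def, hEω, ← hξω]

end AuxFactorization

section PerEpisode

private lemma measurableSet_tT (S : Setup Ω 𝒵 𝒳 μ J Tmax) (t : ℕ) :
    MeasurableSet {ω | t ≤ S.T ω} :=
  S.measurable_T measurableSet_Ici

private lemma measurable_piZ (S : Setup Ω 𝒵 𝒳 μ J Tmax) (l : Fin J) (t : ℕ) :
    Measurable fun ω => S.pi l t (S.Z t ω) :=
  (S.measurable_pi l t).comp ((S.measurable_Z t).mono (S.hist_le t) le_rfl)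

private lemma measurableSet_ECE (S : Setup Ω 𝒵 𝒳 μ J Tmax) (j k : Fin J) (t : ℕ) :
    MeasurableSet (ECE S j k t) :=
  (measurableSet_lt measurable_const (measurable_piZ S j t)).inter
    ((measurableSet_lt measurable_const (measurable_piZ S k t)).inter (measurableSet_tT S t))

/-- The key identity: the episode-`t` IPW term integrates to the integral of the potential
outcome over the episode-`t` ECE population, and it is integrable. -/
lemma integral_ece_term (S : Setup Ω 𝒵 𝒳 μ J Tmax) (j k : Fin J) (t : ℕ) (ht : 1 ≤ t) :
    Integrable (fun ω => if ω ∈ ECE S j k t then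
        (if S.A t ω = j then S.Y t ω / S.pi j t (S.Z t ω) else 0) else 0) μ ∧
    (∫ ω, (if ω ∈ ECE S j k t then
        (if S.A t ω = j then S.Y t ω / S.pi j t (S.Z t ω) else 0) else 0) ∂μ)
      = ∫ ω in ECE S j k t, S.Ypot t j ω ∂μ := by
  classical
  set ν : Measure Ω := μ.restrict {ω | t ≤ S.T ω} with hνdef
  haveI : IsFiniteMeasure ν := by
    refine ⟨?_⟩
    rw [hνdef, Measure.restrict_apply_univ]
    exact measure_lt_top μ _
  have hm : S.hist t ≤ ‹MeasurableSpace Ω› := S.hist_le t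
  haveI : SigmaFinite (ν.trim hm) := by infer_instance
  set ξ : Ω → ℝ := S.Ypot t j with hξdef
  have hξm : Measurable ξ := S.measurable_Ypot t j
  have hξi : Integrable ξ ν := (S.integrable_Ypot t j).restrict
  set E : Set Ω := (S.A t) ⁻¹' {j} with hEdef
  have hE : MeasurableSet E := (S.measurable_A t) (measurableSet_singleton j)
  have hEset : E = {ω | S.A t ω = j} := by ext ω; simp [hEdef]
  -- conditional expectation of the weighted indicator
  have hB : ν[E.indicator ξ | S.hist t] =ᵐ[ν]
      fun ω => S.pi j t (S.Z t ω) * (ν[ξ | S.hist t]) ω := by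
    refine (condexp_indicator_mul_of_condIndepFun hm (S.measurable_A t) hξm hξi
      (measurableSet_singleton j) (S.rand_indep t ht j)).trans ?_
    have hrp := S.rand_prob t ht j
    rw [← hEset] at hrp
    filter_upwards [hrp] with ω hω
    rw [hω]
  set φ : Ω → ℝ := fun ω => |ξ ω| with hφdef
  have hφm : Measurable φ := hξm.abs
  have hφi : Integrable φ ν := hξi.abs
  have hindepφ : CondIndepFun (S.hist t) hm (S.A t) φ ν :=
    (S.rand_indep t ht j).comp measurable_id measurable_abs
  have hBφ : ν[E.indicator φ | S.hist t] =ᵐ[ν]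
      fun ω => S.pi j t (S.Z t ω) * (ν[φ | S.hist t]) ω := by
    refine (condexp_indicator_mul_of_condIndepFun hm (S.measurable_A t) hφm hφi
      (measurableSet_singleton j) hindepφ).trans ?_
    have hrp := S.rand_prob t ht j
    rw [← hEset] at hrp
    filter_upwards [hrp] with ω hω
    rw [hω]
  -- the weight function
  set Cs : Set Ω := {ω | 0 < S.pi j t (S.Z t ω) ∧ 0 < S.pi k t (S.Z t ω)} with hCsdef
  have hCs : MeasurableSet Cs :=
    (measurableSet_lt measurable_const (measurable_piZ S j t)).inter
      (measurableSet_lt measurable_const (measurable_piZ S k t))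
  have hCsm' : MeasurableSet[S.hist t] Cs := by
    have h1 : Measurable[S.hist t] fun ω => S.pi j t (S.Z t ω) :=
      (S.measurable_pi j t).comp (S.measurable_Z t)
    have h2 : Measurable[S.hist t] fun ω => S.pi k t (S.Z t ω) :=
      (S.measurable_pi k t).comp (S.measurable_Z t)
    exact MeasurableSet.inter
      (measurableSet_lt (@measurable_const _ _ _ (S.hist t) _) h1)
      (measurableSet_lt (@measurable_const _ _ _ (S.hist t) _) h2)
  set c : Ω → ℝ := Cs.indicator (fun ω => (S.pi j t (S.Z t ω))⁻¹) with hcdef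
  have hcm' : Measurable[S.hist t] c :=
    Measurable.indicator (Measurable.inv ((S.measurable_pi j t).comp (S.measurable_Z t))) hCsm'
  have hcm : Measurable c := hcm'.mono hm le_rfl
  have hc_nonneg : ∀ ω, 0 ≤ c ω := by
    intro ω
    rw [hcdef]
    by_cases hω : ω ∈ Cs
    · rw [Set.indicator_of_mem hω]
      exact inv_nonneg.mpr (S.pi_nonneg j t _)
    · rw [Set.indicator_of_notMem hω]
  have hcpi : ∀ ω, c ω * S.pi j t (S.Z t ω) = Cs.indicator (fun _ => (1:ℝ)) ω := by
    intro ω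
    by_cases hω : ω ∈ Cs
    · rw [hcdef, Set.indicator_of_mem hω, Set.indicator_of_mem hω]
      exact inv_mul_cancel₀ (ne_of_gt hω.1)
    · rw [hcdef, Set.indicator_of_notMem hω, Set.indicator_of_notMem hω, zero_mul]
  -- integrability of the weighted term
  have hEφi : Integrable (E.indicator φ) ν := hφi.indicator hE
  have hEξi : Integrable (E.indicator ξ) ν := hξi.indicator hE
  have hEφ_nonneg : ∀ ω, 0 ≤ E.indicator φ ω := by
    intro ω
    by_cases hω : ω ∈ E
    · rw [Set.indicator_of_mem hω]; exact abs_nonneg _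
    · rw [Set.indicator_of_notMem hω]
  have hcN_nonneg : ∀ (N : ℕ) (ω : Ω), 0 ≤ min (c ω) N := fun N ω =>
    le_min (hc_nonneg ω) (Nat.cast_nonneg N)
  have hcNint : ∀ N : ℕ, Integrable (fun ω => min (c ω) N * E.indicator φ ω) ν := by
    intro N
    refine Integrable.bdd_mul hEφi ((hcm.min measurable_const).aestronglyMeasurable) (c := N) (Filter.Eventually.of_forall ?_)
    intro ω
    rw [Real.norm_eq_abs, abs_of_nonneg (hcN_nonneg N ω)]
    exact min_le_right _ _
  have hcondφ_nonneg : 0 ≤ᵐ[ν] ν[φ | S.hist t] :=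
    condExp_nonneg (Filter.Eventually.of_forall fun ω => abs_nonneg _)
  have hcondφ_int : Integrable (ν[φ | S.hist t]) ν := integrable_condExp
  have hNbound : ∀ N : ℕ, ∫ ω, min (c ω) N * E.indicator φ ω ∂ν ≤ ∫ ω, φ ω ∂ν := by
    intro N
    have hsm : StronglyMeasurable[S.hist t] fun ω => min (c ω) N :=
      (hcm'.min (@measurable_const _ _ _ (S.hist t) _)).stronglyMeasurable
    have hpull := condExp_mul_of_stronglyMeasurable_left hsm (hcNint N) hEφi
    calc ∫ ω, min (c ω) N * E.indicator φ ω ∂ν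
        = ∫ ω, (ν[(fun ω => min (c ω) N) * E.indicator φ | S.hist t]) ω ∂ν :=
          (integral_condExp hm).symm
      _ = ∫ ω, ((fun ω => min (c ω) N) * ν[E.indicator φ | S.hist t]) ω ∂ν :=
          integral_congr_ae hpull
      _ ≤ ∫ ω, (ν[φ | S.hist t]) ω ∂ν := by
          refine integral_mono_ae (integrable_condExp.bdd_mul
            (c := N) ?_ ?_) hcondφ_int ?_
          · exact (hcm.min measurable_const).aestronglyMeasurable
          · refine Filter.Eventually.of_forall fun ω => ?_
            rw [Real.norm_eq_abs, abs_of_nonneg (hcN_nonneg N ω)]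
            exact min_le_right _ _
          · filter_upwards [hBφ, hcondφ_nonneg] with ω hω hnn
            simp only [Pi.mul_apply]
            rw [hω, ← mul_assoc]
            have hle1 : min (c ω) N * S.pi j t (S.Z t ω) ≤ 1 := by
              have h1 : min (c ω) N * S.pi j t (S.Z t ω) ≤ c ω * S.pi j t (S.Z t ω) :=
                mul_le_mul_of_nonneg_right (min_le_left _ _) (S.pi_nonneg j t _)
              have h2 : c ω * S.pi j t (S.Z t ω) ≤ 1 := by
                rw [hcpi ω]
                by_cases hω' : ω ∈ Cs
                · simp [Set.indicator_of_mem hω']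
                · simp [Set.indicator_of_notMem hω']
              linarith
            have hge0 : 0 ≤ min (c ω) N * S.pi j t (S.Z t ω) :=
              mul_nonneg (hcN_nonneg N ω) (S.pi_nonneg j t _)
            have hnn' : (0:ℝ) ≤ (ν[φ|S.hist t]) ω := hnn
            nlinarith [mul_le_mul_of_nonneg_right hle1 hnn']
      _ = ∫ ω, φ ω ∂ν := integral_condExp hm
  have habs_eq : ∀ ω, |c ω * E.indicator ξ ω| = c ω * E.indicator φ ω := by
    intro ω
    rw [abs_mul, abs_of_nonneg (hc_nonneg ω)]
    congr 1
    by_cases hω : ω ∈ E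
    · rw [Set.indicator_of_mem hω, Set.indicator_of_mem hω]
    · rw [Set.indicator_of_notMem hω, Set.indicator_of_notMem hω, abs_zero]
  have hhm : Measurable fun ω => c ω * E.indicator ξ ω :=
    hcm.mul (hξm.indicator hE)
  have hhint : Integrable (fun ω => c ω * E.indicator ξ ω) ν := by
    refine ⟨hhm.aestronglyMeasurable, ?_⟩
    rw [hasFiniteIntegral_iff_norm]
    have hptsup : ∀ ω, ENNReal.ofReal ‖c ω * E.indicator ξ ω‖
        = ⨆ N : ℕ, ENNReal.ofReal (min (c ω) N * E.indicator φ ω) := by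
      intro ω
      rw [Real.norm_eq_abs, habs_eq ω]
      refine le_antisymm ?_ (iSup_le fun N => ENNReal.ofReal_le_ofReal ?_)
      · obtain ⟨N, hN⟩ := exists_nat_ge (c ω)
        refine le_iSup_of_le N (le_of_eq ?_)
        rw [min_eq_left hN]
      · exact mul_le_mul_of_nonneg_right (min_le_left _ _) (hEφ_nonneg ω)
    calc ∫⁻ ω, ENNReal.ofReal ‖c ω * E.indicator ξ ω‖ ∂ν
        = ∫⁻ ω, ⨆ N : ℕ, ENNReal.ofReal (min (c ω) N * E.indicator φ ω) ∂ν :=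
          lintegral_congr fun ω => hptsup ω
      _ = ⨆ N : ℕ, ∫⁻ ω, ENNReal.ofReal (min (c ω) N * E.indicator φ ω) ∂ν := by
          refine lintegral_iSup (fun N => ?_) (fun N M hNM ω => ?_)
          · exact ((hcm.min measurable_const).mul (hφm.indicator hE)).ennreal_ofReal
          · exact ENNReal.ofReal_le_ofReal (mul_le_mul_of_nonneg_right
              (min_le_min le_rfl (Nat.cast_le.mpr hNM)) (hEφ_nonneg ω))
      _ ≤ ⨆ _ : ℕ, ENNReal.ofReal (∫ ω, φ ω ∂ν) := by
          refine iSup_mono fun N => ?_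
          rw [← ofReal_integral_eq_lintegral_ofReal (hcNint N)
            (Filter.Eventually.of_forall fun ω =>
              mul_nonneg (hcN_nonneg N ω) (hEφ_nonneg ω))]
          exact ENNReal.ofReal_le_ofReal (hNbound N)
      _ < ⊤ := by
          rw [ciSup_const]
          exact ENNReal.ofReal_lt_top
  -- the integral identity over ν
  have hCind : ∀ ω, Cs.indicator (fun _ => (1:ℝ)) ω * ξ ω = Cs.indicator ξ ω := by
    intro ω
    by_cases hω : ω ∈ Cs
    · rw [Set.indicator_of_mem hω, Set.indicator_of_mem hω, one_mul]
    · rw [Set.indicator_of_notMem hω, Set.indicator_of_notMem hω, zero_mul]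
  have hCξi : Integrable (Cs.indicator ξ) ν := hξi.indicator hCs
  have hintν : ∫ ω, c ω * E.indicator ξ ω ∂ν = ∫ ω, Cs.indicator ξ ω ∂ν := by
    have hpull := condExp_mul_of_stronglyMeasurable_left hcm'.stronglyMeasurable hhint hEξi
    have hpull2 := condExp_mul_of_stronglyMeasurable_left
      ((@measurable_const ℝ Ω _ (S.hist t) 1).indicator hCsm').stronglyMeasurable
      (by rw [show (Cs.indicator (fun _ => (1:ℝ)) * ξ) = Cs.indicator ξ from funext hCind]
          exact hCξi) hξi
    calc ∫ ω, c ω * E.indicator ξ ω ∂ν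
        = ∫ ω, (ν[c * E.indicator ξ | S.hist t]) ω ∂ν := (integral_condExp hm).symm
      _ = ∫ ω, (c * ν[E.indicator ξ | S.hist t]) ω ∂ν := integral_congr_ae hpull
      _ = ∫ ω, (Cs.indicator (fun _ => (1:ℝ)) * ν[ξ | S.hist t]) ω ∂ν := by
          refine integral_congr_ae ?_
          filter_upwards [hB] with ω hω
          simp only [Pi.mul_apply]
          rw [hω, ← mul_assoc, hcpi ω]
      _ = ∫ ω, (ν[Cs.indicator (fun _ => (1:ℝ)) * ξ | S.hist t]) ω ∂ν :=
          (integral_congr_ae hpull2).symm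
      _ = ∫ ω, (Cs.indicator (fun _ => (1:ℝ)) * ξ) ω ∂ν := integral_condExp hm
      _ = ∫ ω, Cs.indicator ξ ω ∂ν := integral_congr_ae (Filter.Eventually.of_forall hCind)
  -- identification of the integrand
  have hfun : (fun ω => if ω ∈ ECE S j k t then
      (if S.A t ω = j then S.Y t ω / S.pi j t (S.Z t ω) else 0) else 0)
      = {ω | t ≤ S.T ω}.indicator (fun ω => c ω * E.indicator ξ ω) := by
    funext ω
    by_cases h1 : t ≤ S.T ω
    · rw [Set.indicator_of_mem (show ω ∈ {ω | t ≤ S.T ω} from h1)]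
      by_cases h2 : 0 < S.pi j t (S.Z t ω) ∧ 0 < S.pi k t (S.Z t ω)
      · have hECE : ω ∈ ECE S j k t := ⟨h2.1, h2.2, h1⟩
        rw [if_pos hECE, hcdef, Set.indicator_of_mem (show ω ∈ Cs from h2)]
        by_cases h3 : S.A t ω = j
        · rw [if_pos h3, Set.indicator_of_mem (show ω ∈ E by rw [hEset]; exact h3)]
          have hcons := S.consistency t ω
          rw [h3] at hcons
          rw [hξdef]
          rw [hcons, div_eq_inv_mul]
        · rw [if_neg h3, Set.indicator_of_notMem
            (show ω ∉ E by rw [hEset]; exact h3), mul_zero]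
      · have hECE : ω ∉ ECE S j k t := fun h => h2 ⟨h.1, h.2.1⟩
        rw [if_neg hECE, hcdef, Set.indicator_of_notMem (show ω ∉ Cs from h2), zero_mul]
    · rw [Set.indicator_of_notMem (show ω ∉ {ω | t ≤ S.T ω} from h1), if_neg (fun h => h1 h.2.2)]
  have hECEeq : Cs ∩ {ω | t ≤ S.T ω} = ECE S j k t := by
    ext ω
    simp only [Set.mem_inter_iff, Set.mem_setOf_eq, ECE, hCsdef]
    tauto
  constructor
  · rw [hfun]
    exact (integrable_indicator_iff (measurableSet_tT S t)).mpr hhint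
  · rw [hfun, integral_indicator (measurableSet_tT S t)]
    have hres : ∫ ω in {ω | t ≤ S.T ω}, c ω * E.indicator ξ ω ∂μ
        = ∫ ω, c ω * E.indicator ξ ω ∂ν := rfl
    rw [hres, hintν, integral_indicator hCs, hνdef, Measure.restrict_restrict hCs, hECEeq]

/-- The set integral of the potential outcome over the ECE population equals
`probECE * thetaT`. -/
lemma setIntegral_eq_probECE_mul_thetaT (S : Setup Ω 𝒵 𝒳 μ J Tmax) (j k : Fin J) (t : ℕ) :
    ∫ ω in ECE S j k t, S.Ypot t j ω ∂μ = probECE S j k t * thetaT S j k t := by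
  by_cases hz : μ (ECE S j k t) = 0
  · rw [probECE, hz, ENNReal.toReal_zero, zero_mul,
      Measure.restrict_eq_zero.mpr hz, integral_zero_measure]
  · rw [thetaT, ProbabilityTheory.cond, integral_smul_measure, probECE, smul_eq_mul,
      ENNReal.toReal_inv, ← mul_assoc,
      mul_inv_cancel₀ (ENNReal.toReal_ne_zero.mpr ⟨hz, measure_ne_top μ _⟩), one_mul]

end PerEpisode

section Statement

variable {Ω' : Type*} [MeasurableSpace Ω'] (P : Measure Ω') [IsProbabilityMeasure P]

/-- under Assumption 1 and consistency, the IPW influence term is mean zero: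
`E[ Σ_t I_{jkt} ( 1{A_t = j} Y_t / π_j^t(Z_t) − θ_{jk} ) ] = 0`. -/
theorem ipw_influence_mean_zero (S : Setup Ω 𝒵 𝒳 μ J Tmax) (j k : Fin J) :
    (∫ ω, (∑ t ∈ Finset.Icc 1 Tmax,
        if ω ∈ ECE S j k t then
          (if S.A t ω = j then S.Y t ω / S.pi j t (S.Z t ω) else 0) - theta S j k
        else 0) ∂μ) = 0 := by
  classical
  set θ := theta S j k with hθdef
  have hterm : ∀ t ∈ Finset.Icc 1 Tmax,
      Integrable (fun ω => if ω ∈ ECE S j k t then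
        (if S.A t ω = j then S.Y t ω / S.pi j t (S.Z t ω) else 0) - θ else 0) μ ∧
      (∫ ω, (if ω ∈ ECE S j k t then
        (if S.A t ω = j then S.Y t ω / S.pi j t (S.Z t ω) else 0) - θ else 0) ∂μ)
        = probECE S j k t * thetaT S j k t - probECE S j k t * θ := by
    intro t htmem
    obtain ⟨hint, heq⟩ := integral_ece_term S j k t (Finset.mem_Icc.mp htmem).1
    have hdecomp : (fun ω => if ω ∈ ECE S j k t then
        (if S.A t ω = j then S.Y t ω / S.pi j t (S.Z t ω) else 0) - θ else 0)
        = fun ω => (if ω ∈ ECE S j k t then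
            (if S.A t ω = j then S.Y t ω / S.pi j t (S.Z t ω) else 0) else 0)
          - (ECE S j k t).indicator (fun _ => θ) ω := by
      funext ω
      by_cases hω : ω ∈ ECE S j k t
      · rw [if_pos hω, if_pos hω, Set.indicator_of_mem hω]
      · rw [if_neg hω, if_neg hω, Set.indicator_of_notMem hω, sub_zero]
    have hind_int : Integrable ((ECE S j k t).indicator (fun _ => θ)) μ :=
      (integrable_const θ).indicator (measurableSet_ECE S j k t)
    constructor
    · rw [hdecomp]; exact hint.sub hind_int
    · rw [hdecomp, integral_sub hint hind_int, heq,
        setIntegral_eq_probECE_mul_thetaT S j k t,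
        integral_indicator_const θ (measurableSet_ECE S j k t), smul_eq_mul, probECE, measureReal_def]
  rw [integral_finset_sum _ fun t htmem => (hterm t htmem).1,
    Finset.sum_congr rfl fun t htmem => (hterm t htmem).2,
    Finset.sum_sub_distrib]
  by_cases hz : (∑ t ∈ Finset.Icc 1 Tmax, probECE S j k t) = 0
  · have hzero : ∀ t ∈ Finset.Icc 1 Tmax, probECE S j k t = 0 :=
      (Finset.sum_eq_zero_iff_of_nonneg fun t _ => ENNReal.toReal_nonneg).1 hz
    rw [Finset.sum_eq_zero fun t htm => by rw [hzero t htm, zero_mul],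
      Finset.sum_eq_zero fun t htm => by rw [hzero t htm, zero_mul], sub_zero]
  · have h1 : (∑ t ∈ Finset.Icc 1 Tmax, probECE S j k t * θ)
        = (∑ t ∈ Finset.Icc 1 Tmax, probECE S j k t * thetaT S j k t) := by
      rw [← Finset.sum_mul, hθdef, theta, mul_comm, div_mul_cancel₀ _ hz]
    rw [h1, sub_self]

end Statement

end MasterProtocol
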